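/- arXiv:1607.08365 — 4 statements merged into one kernel-verified Lean document; each statement's English description precedes it below -/
import Mathlib

section
/- Let σ < τ be reals and r ≥ 0. Let u : [σ,τ] → ℝ be continuous and concave on [σ,τ], with u(σ) ≥ 0, u(τ) ≥ 0, and max_{x∈[σ,τ]} u(x) = r. Then u(x) ≥ (r/(τ−σ))·min{x−σ, τ−x} for every x ∈ [σ,τ]. -/
open Set

/-- If `u` is continuous and concave on `[σ,τ]`, nonnegative at the
endpoints, and attains maximum value `r ≥ 0` on `[σ,τ]`, then
`u x ≥ (r/(τ-σ)) * min (x-σ) (τ-x)` for every `x ∈ [σ,τ]`. -/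
theorem concave_lower_bound
    (σ τ r : ℝ) (hστ : σ < τ) (hr : 0 ≤ r)
    (u : ℝ → ℝ)
    (hu_cont : ContinuousOn u (Set.Icc σ τ))
    (hu_conc : ∀ x ∈ Set.Icc σ τ, ∀ y ∈ Set.Icc σ τ, ∀ t ∈ Set.Icc (0:ℝ) 1,
        t * u x + (1 - t) * u y ≤ u (t * x + (1 - t) * y))
    (huσ : 0 ≤ u σ) (huτ : 0 ≤ u τ)
    (hmax_le : ∀ x ∈ Set.Icc σ τ, u x ≤ r)
    (hmax_attained : ∃ x ∈ Set.Icc σ τ, u x = r) :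
    ∀ x ∈ Set.Icc σ τ, r / (τ - σ) * min (x - σ) (τ - x) ≤ u x := by
  obtain ⟨c, ⟨hc1, hc2⟩, huc⟩ := hmax_attained
  intro x ⟨hx1, hx2⟩
  have hτσ : 0 < τ - σ := by linarith
  rcases le_or_gt x c with hxc | hxc
  · rcases eq_or_lt_of_le hx1 with hxe | hxe
    · subst hxe
      have hm : min (σ - σ) (τ - σ) = 0 := by
        rw [sub_self]; exact min_eq_left (by linarith)
      rw [hm, mul_zero]
      exact huσ
    · have hcσ : 0 < c - σ := by linarith
      set t := (x - σ) / (c - σ) with ht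
      have ht0 : 0 ≤ t := div_nonneg (by linarith) hcσ.le
      have ht1 : t ≤ 1 := by
        rw [div_le_one hcσ]; linarith
      have htc : t * (c - σ) = x - σ := div_mul_cancel₀ _ hcσ.ne'
      have hcomb : t * c + (1 - t) * σ = x := by linear_combination htc
      have key := hu_conc c ⟨hc1, hc2⟩ σ ⟨le_refl σ, hστ.le⟩ t ⟨ht0, ht1⟩
      rw [hcomb, huc] at key
      have h1 : r / (τ - σ) * min (x - σ) (τ - x) ≤ r / (τ - σ) * (x - σ) :=
        mul_le_mul_of_nonneg_left (min_le_left _ _) (div_nonneg hr hτσ.le)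
      have h2 : r / (τ - σ) * (x - σ) ≤ r / (c - σ) * (x - σ) := by
        gcongr
      have h3 : r / (c - σ) * (x - σ) = t * r := by
        rw [ht]; ring
      have h4 : 0 ≤ (1 - t) * u σ := mul_nonneg (by linarith) huσ
      linarith
  · rcases eq_or_lt_of_le hx2 with hxe | hxe
    · subst hxe
      have hm : min (x - σ) (x - x) = 0 := by
        rw [sub_self]; exact min_eq_right (by linarith)
      rw [hm, mul_zero]
      exact huτ
    · have hcτ : 0 < τ - c := by linarith
      set t := (τ - x) / (τ - c) with ht
      have ht0 : 0 ≤ t := div_nonneg (by linarith) hcτ.le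
      have ht1 : t ≤ 1 := by
        rw [div_le_one hcτ]; linarith
      have htc : t * (τ - c) = τ - x := div_mul_cancel₀ _ hcτ.ne'
      have hcomb : t * c + (1 - t) * τ = x := by linear_combination -htc
      have key := hu_conc c ⟨hc1, hc2⟩ τ ⟨hστ.le, le_refl τ⟩ t ⟨ht0, ht1⟩
      rw [hcomb, huc] at key
      have h1 : r / (τ - σ) * min (x - σ) (τ - x) ≤ r / (τ - σ) * (τ - x) :=
        mul_le_mul_of_nonneg_left (min_le_right _ _) (div_nonneg hr hτσ.le)
      have h2 : r / (τ - σ) * (τ - x) ≤ r / (τ - c) * (τ - x) := by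
        gcongr
      have h3 : r / (τ - c) * (τ - x) = t * r := by
        rw [ht]; ring
      have h4 : 0 ≤ (1 - t) * u τ := mul_nonneg (by linarith) huτ
      linarith
end

section
/- Let σ < τ be reals and r > 0. Let η : [σ,τ] → [0,∞) be Lebesgue integrable and let w : [σ,τ] → ℝ be measurable with |w(ξ)| ≤ η(ξ) for a.e. ξ ∈ [σ,τ]. Let u : [σ,τ] → ℝ be of class C¹ with u'(x) = u'(σ) − ∫_σ^x w(ξ) dξ for all x ∈ [σ,τ], and assume 0 ≤ u(x) ≤ r for all x ∈ [σ,τ]. Then |u'(x)| ≤ r/(τ−σ) + ∫_σ^τ η(ξ) dξ for every x ∈ [σ,τ]. -/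
open Set MeasureTheory

/-- A priori bound for the derivative: if `u` is `C¹` on `[σ,τ]` with
`u'(x) = u'(σ) - ∫_σ^x w`, `|w| ≤ η` a.e. with `η` integrable, and `0 ≤ u ≤ r` on `[σ,τ]`,
then `|u'(x)| ≤ r/(τ-σ) + ∫_σ^τ η` on `[σ,τ]`. -/
theorem deriv_apriori_bound
    (σ τ r : ℝ) (hστ : σ < τ) (hr : 0 < r)
    (η w : ℝ → ℝ)
    (hη_int : IntegrableOn η (Set.Icc σ τ))
    (hη_nonneg : ∀ x, 0 ≤ η x)
    (hw_meas : Measurable ((Set.Icc σ τ).restrict w))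
    (hw_bound : ∀ᵐ ξ ∂(volume.restrict (Set.Icc σ τ)), |w ξ| ≤ η ξ)
    (u u' : ℝ → ℝ)
    (hu_deriv : ∀ x ∈ Set.Icc σ τ, HasDerivWithinAt u (u' x) (Set.Icc σ τ) x)
    (hu'_cont : ContinuousOn u' (Set.Icc σ τ))
    (hu'_eq : ∀ x ∈ Set.Icc σ τ, u' x = u' σ - ∫ ξ in σ..x, w ξ)
    (hu_range : ∀ x ∈ Set.Icc σ τ, 0 ≤ u x ∧ u x ≤ r) :
    ∀ x ∈ Set.Icc σ τ, |u' x| ≤ r / (τ - σ) + ∫ ξ in σ..τ, η ξ := by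
  -- `w` is integrable on `[σ,τ]`
  have hw_aesm : AEStronglyMeasurable w (volume.restrict (Set.Icc σ τ)) :=
    (aemeasurable_restrict_of_measurable_subtype measurableSet_Icc hw_meas).aestronglyMeasurable
  have hw_int : IntegrableOn w (Set.Icc σ τ) := by
    refine Integrable.mono' hη_int hw_aesm ?_
    filter_upwards [hw_bound] with ξ h using by simpa [Real.norm_eq_abs] using h
  -- mean value theorem: some point with small derivative
  have hu_cont : ContinuousOn u (Set.Icc σ τ) := fun x hx =>
    (hu_deriv x hx).continuousWithinAt
  have hderiv : ∀ x ∈ Set.Ioo σ τ, HasDerivAt u (u' x) x := by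
    intro x hx
    refine (hu_deriv x (Set.Ioo_subset_Icc_self hx)).hasDerivAt ?_
    exact Filter.mem_of_superset (Ioo_mem_nhds hx.1 hx.2) Set.Ioo_subset_Icc_self
  obtain ⟨c, hc, hc_eq⟩ := exists_hasDerivAt_eq_slope u u' hστ hu_cont hderiv
  have hcIcc : c ∈ Set.Icc σ τ := Set.Ioo_subset_Icc_self hc
  have hτσ : (0:ℝ) < τ - σ := sub_pos.mpr hστ
  have hc_bound : |u' c| ≤ r / (τ - σ) := by
    rw [hc_eq, abs_div, abs_of_pos hτσ]
    have h1 := hu_range τ (Set.right_mem_Icc.mpr hστ.le)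
    have h2 := hu_range σ (Set.left_mem_Icc.mpr hστ.le)
    have : |u τ - u σ| ≤ r := by
      rw [abs_sub_le_iff]; constructor <;> linarith [h1.1, h1.2, h2.1, h2.2]
    gcongr
  -- bound on integrals of w over subintervals
  have hint_bound : ∀ a b, a ∈ Set.Icc σ τ → b ∈ Set.Icc σ τ →
      |∫ ξ in a..b, w ξ| ≤ ∫ ξ in σ..τ, η ξ := by
    intro a b ha hb
    have hsub : Set.uIoc a b ⊆ Set.Icc σ τ := by
      exact Set.Subset.trans Set.Ioc_subset_Icc_self (Set.uIcc_subset_Icc ha hb)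
    have hwb : ∀ᵐ ξ ∂(volume.restrict (Set.uIoc a b)), |w ξ| ≤ η ξ :=
      ae_restrict_of_ae_restrict_of_subset hsub hw_bound
    calc |∫ ξ in a..b, w ξ| ≤ ∫ ξ in Set.uIoc a b, |w ξ| := by
          simpa [Real.norm_eq_abs] using
            intervalIntegral.norm_integral_le_integral_norm_uIoc (f := w) (a := a) (b := b) (μ := volume)
      _ ≤ ∫ ξ in Set.uIoc a b, η ξ := by
          exact setIntegral_mono_ae_restrict ((hw_int.mono_set hsub).abs) (hη_int.mono_set hsub) hwb
      _ ≤ ∫ ξ in Set.Icc σ τ, η ξ := by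
          refine setIntegral_mono_set hη_int ?_ (Filter.Eventually.of_forall hsub)
          filter_upwards with ξ using hη_nonneg ξ
      _ = ∫ ξ in σ..τ, η ξ := by
          rw [intervalIntegral.integral_of_le hστ.le, integral_Icc_eq_integral_Ioc]
  -- conclusion
  intro x hx
  have hwi : ∀ a b, a ∈ Set.Icc σ τ → b ∈ Set.Icc σ τ → IntervalIntegrable w volume a b := by
    intro a b ha hb
    exact (hw_int.mono_set (Set.uIcc_subset_Icc ha hb)).intervalIntegrable
  have key : u' x = u' c - ∫ ξ in c..x, w ξ := by
    rw [hu'_eq x hx, hu'_eq c hcIcc, ← intervalIntegral.integral_interval_sub_left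
      (hwi σ x (Set.left_mem_Icc.mpr hστ.le) hx) (hwi σ c (Set.left_mem_Icc.mpr hστ.le) hcIcc)]
    ring
  calc |u' x| ≤ |u' c| + |∫ ξ in c..x, w ξ| := by
        rw [key]; exact (abs_sub _ _)
    _ ≤ r / (τ - σ) + ∫ ξ in σ..τ, η ξ :=
        add_le_add hc_bound (hint_bound c x hcIcc hx)
end

section
/- Let σ < τ be reals, let 0 < ρ < λ and r > 0, and let a : [σ,τ] → [0,∞) be Lebesgue integrable. Let φ : [σ,τ] → ℝ be of class C¹ with φ'(x) = φ'(σ) − λ·∫_σ^x a(ξ)φ(ξ) dξ for all x ∈ [σ,τ], φ(σ) = φ(τ) = 0, and φ(x) ≥ 0 for all x ∈ [σ,τ]. Let G : [0,∞) → [0,∞) be continuous with G(0) = 0 and G(s) < (λ−ρ)·s for all 0 < s ≤ r. Let u : [σ,τ] → [0,r] be of class C¹ with u'(x) = u'(σ) − ∫_σ^x a(ξ)G(u(ξ)) dξ for all x ∈ [σ,τ], and with max_{x∈[σ,τ]} u(x) = r. Then (sup_{x∈[σ,τ]} |φ'(x)|)·(u(σ) + u(τ)) ≥ (ρ·r/(τ−σ))·∫_σ^τ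 min{x−σ, τ−x}·a(x)·φ(x) dx. -/
/-!
Green's identity for `φ'' = -λ a φ` and `u'' = -a G(u)`, with `φ` vanishing at `σ` and `τ`, gives
`λ ∫ a φ u - ∫ a G(u) φ = φ'(σ) u(σ) - φ'(τ) u(τ) ≤ sup |φ'| · (u(σ) + u(τ))`.
Since `G(s) ≤ (λ - ρ) s`, the left side is at least `ρ ∫ a φ u`; and `u`, being concave
(`u'' ≤ 0`), nonnegative at the endpoints and equal to `r` somewhere, lies above the tent
`r · min (x - σ) (τ - x) / (τ - σ)`. The second derivatives are merely integrable, so the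
integrations by parts are those for absolutely continuous functions.
-/

open Set MeasureTheory
open scoped Interval

section DerivOnIcc

variable {a b : ℝ} {w w' : ℝ → ℝ}

theorem absolutelyContinuousOnInterval_of_hasDerivWithinAt (hab : a ≤ b)
    (hw : ∀ x ∈ Icc a b, HasDerivWithinAt w (w' x) (Icc a b) x)
    (hw' : ContinuousOn w' (Icc a b)) : AbsolutelyContinuousOnInterval w a b := by
  obtain ⟨C, hC⟩ := (isCompact_Icc.image_of_continuousOn hw'.nnnorm).bddAbove
  rw [← uIcc_of_le hab] at hw hC
  exact (Convex.lipschitzOnWith_of_nnnorm_hasDerivWithin_le (convex_uIcc a b) hw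
    fun x hx => hC ⟨x, hx, rfl⟩).absolutelyContinuousOnInterval

theorem ae_deriv_eq_of_hasDerivWithinAt_Icc (hab : a ≤ b)
    (hw : ∀ x ∈ Icc a b, HasDerivWithinAt w (w' x) (Icc a b) x) :
    ∀ᵐ x, x ∈ Ι a b → deriv w x = w' x := by
  filter_upwards [Measure.ae_ne volume b] with x hxb hx
  rw [uIoc_of_le hab] at hx
  exact ((hw x (Ioc_subset_Icc_self hx)).hasDerivAt
    (Icc_mem_nhds hx.1 (lt_of_le_of_ne hx.2 hxb))).deriv

theorem integral_eq_sub_of_hasDerivWithinAt_Icc (hab : a ≤ b)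
    (hw : ∀ x ∈ Icc a b, HasDerivWithinAt w (w' x) (Icc a b) x)
    (hw' : ContinuousOn w' (Icc a b)) : ∫ x in a..b, w' x = w b - w a := by
  rw [← (absolutelyContinuousOnInterval_of_hasDerivWithinAt hab hw hw').integral_deriv_eq_sub]
  exact intervalIntegral.integral_congr_ae
    ((ae_deriv_eq_of_hasDerivWithinAt_Icc hab hw).mono fun x hx hxab => (hx hxab).symm)

theorem integral_deriv_mul_primitive_eq (hab : a ≤ b) {f : ℝ → ℝ}
    (hf : IntervalIntegrable f volume a b)
    (hw : ∀ x ∈ Icc a b, HasDerivWithinAt w (w' x) (Icc a b) x)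
    (hw' : ContinuousOn w' (Icc a b)) :
    ∫ x in a..b, w' x * ∫ t in a..x, f t = w b * (∫ t in a..b, f t) - ∫ x in a..b, f x * w x := by
  have hF := hf.absolutelyContinuousOnInterval_intervalIntegral (c := a) left_mem_uIcc
  have hibp := AbsolutelyContinuousOnInterval.integral_mul_deriv_eq_deriv_mul
    (absolutelyContinuousOnInterval_of_hasDerivWithinAt hab hw hw') hF
  simp only [intervalIntegral.integral_same, mul_zero, sub_zero] at hibp
  have hderivF : ∀ᵐ x, x ∈ Ι a b → w x * deriv (fun x => ∫ t in a..x, f t) x = f x * w x := by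
    filter_upwards [hf.ae_hasDerivAt_integral] with x hx hxab
    rw [(hx (uIoc_subset_uIcc hxab) a left_mem_uIcc).deriv, mul_comm]
  have hderivw : ∀ᵐ x, x ∈ Ι a b →
      deriv w x * (∫ t in a..x, f t) = w' x * ∫ t in a..x, f t := by
    filter_upwards [ae_deriv_eq_of_hasDerivWithinAt_Icc hab hw] with x hx hxab
    rw [hx hxab]
  rw [intervalIntegral.integral_congr_ae hderivF,
    intervalIntegral.integral_congr_ae hderivw] at hibp
  linarith

theorem integral_deriv_mul_eq_of_eq_sub_primitive (hab : a ≤ b) {f g : ℝ → ℝ}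
    (hf : IntervalIntegrable f volume a b)
    (hg : ∀ x ∈ Icc a b, g x = g a - ∫ t in a..x, f t)
    (hw : ∀ x ∈ Icc a b, HasDerivWithinAt w (w' x) (Icc a b) x)
    (hw' : ContinuousOn w' (Icc a b)) :
    ∫ x in a..b, w' x * g x = g b * w b - g a * w a + ∫ x in a..b, f x * w x := by
  have hw'_int : IntervalIntegrable w' volume a b := hw'.intervalIntegrable_of_Icc hab
  have hprod_int : IntervalIntegrable (fun x => w' x * ∫ t in a..x, f t) volume a b :=
    hw'_int.mul_continuousOn (intervalIntegral.continuousOn_primitive_interval' hf left_mem_uIcc)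
  have hexpand : ∫ x in a..b, w' x * g x = ∫ x in a..b, (g a * w' x - w' x * ∫ t in a..x, f t) :=
    intervalIntegral.integral_congr fun x hx => by
      rw [hg x (by rwa [uIcc_of_le hab] at hx)]
      ring
  rw [hexpand, intervalIntegral.integral_sub (hw'_int.const_mul _) hprod_int,
    intervalIntegral.integral_const_mul, integral_eq_sub_of_hasDerivWithinAt_Icc hab hw hw',
    integral_deriv_mul_primitive_eq hab hf hw hw', hg b (right_mem_Icc.2 hab)]
  ring

theorem integral_mul_sub_mul_eq_of_eq_sub_primitive (hab : a ≤ b)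
    {f₁ f₂ w₁ w₂ g₁ g₂ : ℝ → ℝ}
    (hf₁ : IntervalIntegrable f₁ volume a b) (hf₂ : IntervalIntegrable f₂ volume a b)
    (hw₁ : ∀ x ∈ Icc a b, HasDerivWithinAt w₁ (g₁ x) (Icc a b) x)
    (hw₂ : ∀ x ∈ Icc a b, HasDerivWithinAt w₂ (g₂ x) (Icc a b) x)
    (hg₁c : ContinuousOn g₁ (Icc a b)) (hg₂c : ContinuousOn g₂ (Icc a b))
    (hg₁ : ∀ x ∈ Icc a b, g₁ x = g₁ a - ∫ t in a..x, f₁ t)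
    (hg₂ : ∀ x ∈ Icc a b, g₂ x = g₂ a - ∫ t in a..x, f₂ t) :
    ∫ x in a..b, (f₁ x * w₂ x - f₂ x * w₁ x) =
      (g₂ b * w₁ b - g₂ a * w₁ a) - (g₁ b * w₂ b - g₁ a * w₂ a) := by
  have h₁ := integral_deriv_mul_eq_of_eq_sub_primitive hab hf₁ hg₁ hw₂ hg₂c
  have h₂ := integral_deriv_mul_eq_of_eq_sub_primitive hab hf₂ hg₂ hw₁ hg₁c
  have hcomm : ∫ x in a..b, g₂ x * g₁ x = ∫ x in a..b, g₁ x * g₂ x :=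
    intervalIntegral.integral_congr fun x _ => mul_comm _ _
  rw [← uIcc_of_le hab] at hw₁ hw₂
  rw [intervalIntegral.integral_sub (hf₁.mul_continuousOn (HasDerivWithinAt.continuousOn hw₂))
    (hf₂.mul_continuousOn (HasDerivWithinAt.continuousOn hw₁))]
  linarith

theorem antitoneOn_of_eq_sub_primitive {f g : ℝ → ℝ} (hf : IntervalIntegrable f volume a b)
    (hf₀ : ∀ x ∈ Icc a b, 0 ≤ f x) (hg : ∀ x ∈ Icc a b, g x = g a - ∫ t in a..x, f t) :
    AntitoneOn g (Icc a b) := by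
  intro x hx y hy hxy
  rw [hg x hx, hg y hy, sub_le_sub_iff_left]
  refine intervalIntegral.integral_mono_interval le_rfl hx.1 hxy ?_
    (hf.mono_set (uIcc_subset_uIcc left_mem_uIcc (Icc_subset_uIcc hy)))
  exact (ae_restrict_iff' measurableSet_Ioc).2 (Filter.Eventually.of_forall
    fun t ht => hf₀ t ⟨ht.1.le, ht.2.trans hy.2⟩)

theorem concaveOn_of_hasDerivWithinAt_Icc_of_antitoneOn
    (hw : ∀ x ∈ Icc a b, HasDerivWithinAt w (w' x) (Icc a b) x) (hw' : AntitoneOn w' (Icc a b)) :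
    ConcaveOn ℝ (Icc a b) w := by
  have hderiv : ∀ x ∈ interior (Icc a b), HasDerivAt w (w' x) x := fun x hx =>
    (hw x (interior_subset hx)).hasDerivAt (mem_interior_iff_mem_nhds.1 hx)
  refine AntitoneOn.concaveOn_of_deriv (convex_Icc a b) (HasDerivWithinAt.continuousOn hw)
    (fun x hx => (hderiv x hx).differentiableAt.differentiableWithinAt) ?_
  intro x hx y hy hxy
  rw [(hderiv x hx).deriv, (hderiv y hy).deriv]
  exact hw' (interior_subset hx) (interior_subset hy) hxy

end DerivOnIcc

theorem ConcaveOn.mul_min_div_le {u : ℝ → ℝ} {a b x₀ r x : ℝ} (hu : ConcaveOn ℝ (Icc a b) u)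
    (ha : 0 ≤ u a) (hb : 0 ≤ u b) (hx₀ : x₀ ∈ Icc a b) (hr : 0 ≤ r) (hrx₀ : r ≤ u x₀)
    (hx : x ∈ Icc a b) : r * min (x - a) (b - x) / (b - a) ≤ u x := by
  have hab : a ≤ b := hx.1.trans hx.2
  set c := r / (b - a) with hc_def
  have hc : 0 ≤ c := div_nonneg hr (sub_nonneg.2 hab)
  have hc_le : ∀ d ≤ b - a, c * d ≤ r := fun d hd => by
    calc c * d = r * (d / (b - a)) := by ring
      _ ≤ r * 1 := by gcongr; exact div_le_one_of_le₀ hd (sub_nonneg.2 hab)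
      _ = r := mul_one r
  rw [mul_comm, mul_div_assoc, mul_comm, ← hc_def]
  -- `u ∓ c · id` is concave, so it dominates its minimum over the endpoints of `[a, x₀]`
  -- (resp. `[x₀, b]`).
  rcases le_total x x₀ with hxx₀ | hx₀x
  · have hmin := (hu.sub ((convexOn_id (convex_Icc a b)).smul hc)).min_le_of_mem_Icc
      (left_mem_Icc.2 hab) hx₀ ⟨hx.1, hxx₀⟩
    simp only [Pi.sub_apply, id, smul_eq_mul] at hmin
    have hcx₀ := hc_le (x₀ - a) (by linarith [hx₀.2])
    have hlow : -(c * a) ≤ min (u a - c * a) (u x₀ - c * x₀) :=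
      le_min (by linarith) (by linarith)
    have hline : c * (x - a) ≤ u x := by linarith
    exact (mul_le_mul_of_nonneg_left (min_le_left _ _) hc).trans hline
  · have hmin := (hu.add ((concaveOn_id (convex_Icc a b)).smul hc)).min_le_of_mem_Icc
      hx₀ (right_mem_Icc.2 hab) ⟨hx₀x, hx.2⟩
    simp only [Pi.add_apply, id, smul_eq_mul] at hmin
    have hcx₀ := hc_le (b - x₀) (by linarith [hx₀.1])
    have hlow : c * b ≤ min (u x₀ + c * x₀) (u b + c * b) :=
      le_min (by linarith) (by linarith)
    have hline : c * (b - x) ≤ u x := by linarith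
    exact (mul_le_mul_of_nonneg_left (min_le_right _ _) hc).trans hline

theorem mul_sub_mul_le_sSup_abs_mul_add {α : Type*} [TopologicalSpace α] {g : α → ℝ}
    {s : Set α} (hs : IsCompact s) (hg : ContinuousOn g s) {x y : α} (hx : x ∈ s) (hy : y ∈ s)
    {p q : ℝ} (hp : 0 ≤ p) (hq : 0 ≤ q) :
    g x * p - g y * q ≤ sSup ((fun z => |g z|) '' s) * (p + q) := by
  have hbdd := (hs.image_of_continuousOn hg.abs).bddAbove
  have hx' := mul_le_mul_of_nonneg_right ((le_abs_self _).trans (le_csSup hbdd ⟨x, hx, rfl⟩)) hp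
  have hy' := mul_le_mul_of_nonneg_right ((neg_le_abs _).trans (le_csSup hbdd ⟨y, hy, rfl⟩)) hq
  linarith

theorem boundary_lower_bound_via_eigenfunction_general
    (σ τ : ℝ) (hστ : σ < τ)
    (ρ lam r : ℝ) (hρ : 0 < ρ) (hr : 0 < r)
    (a : ℝ → ℝ) (ha_int : IntegrableOn a (Set.Icc σ τ)) (ha_nonneg : ∀ x, 0 ≤ a x)
    (φ φ' : ℝ → ℝ)
    (hφ_deriv : ∀ x ∈ Set.Icc σ τ, HasDerivWithinAt φ (φ' x) (Set.Icc σ τ) x)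
    (hφ'_cont : ContinuousOn φ' (Set.Icc σ τ))
    (hφ'_eq : ∀ x ∈ Set.Icc σ τ, φ' x = φ' σ - lam * ∫ ξ in σ..x, a ξ * φ ξ)
    (hφσ : φ σ = 0) (hφτ : φ τ = 0)
    (hφ_nonneg : ∀ x ∈ Set.Icc σ τ, 0 ≤ φ x)
    (G : ℝ → ℝ) (hG_cont : ContinuousOn G (Set.Ici 0))
    (hG_nonneg : ∀ s, 0 ≤ s → 0 ≤ G s) (hG0 : G 0 = 0)
    (hG_lt : ∀ s, 0 < s → s ≤ r → G s < (lam - ρ) * s)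
    (u u' : ℝ → ℝ)
    (hu_deriv : ∀ x ∈ Set.Icc σ τ, HasDerivWithinAt u (u' x) (Set.Icc σ τ) x)
    (hu'_cont : ContinuousOn u' (Set.Icc σ τ))
    (hu_range : ∀ x ∈ Set.Icc σ τ, 0 ≤ u x ∧ u x ≤ r)
    (hu'_eq : ∀ x ∈ Set.Icc σ τ, u' x = u' σ - ∫ ξ in σ..x, a ξ * G (u ξ))
    (hu_max : ∃ x ∈ Set.Icc σ τ, u x = r) :
    ρ * r / (τ - σ) * ∫ x in σ..τ, (min (x - σ) (τ - x)) * a x * φ x ≤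
      (sSup ((fun x => |φ' x|) '' Set.Icc σ τ)) * (u σ + u τ) := by
  have hle := hστ.le
  have hIcc : uIcc σ τ = Icc σ τ := uIcc_of_le hle
  have hσ : σ ∈ Icc σ τ := left_mem_Icc.2 hle
  have hτ : τ ∈ Icc σ τ := right_mem_Icc.2 hle
  have hφc : ContinuousOn φ (uIcc σ τ) := hIcc ▸ HasDerivWithinAt.continuousOn hφ_deriv
  have huc : ContinuousOn u (uIcc σ τ) := hIcc ▸ HasDerivWithinAt.continuousOn hu_deriv
  have hGuc : ContinuousOn (fun x => G (u x)) (uIcc σ τ) :=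
    hG_cont.comp huc fun x hx => (hu_range x (hIcc ▸ hx)).1
  have haI : IntervalIntegrable a volume σ τ :=
    (intervalIntegrable_iff_integrableOn_Icc_of_le hle).2 ha_int
  have hgreen := integral_mul_sub_mul_eq_of_eq_sub_primitive hle
    ((haI.mul_continuousOn hφc).const_mul lam) (haI.mul_continuousOn hGuc) hφ_deriv hu_deriv
    hφ'_cont hu'_cont (fun x hx => by rw [hφ'_eq x hx, intervalIntegral.integral_const_mul])
    hu'_eq
  have hconc := concaveOn_of_hasDerivWithinAt_Icc_of_antitoneOn hu_deriv
    (antitoneOn_of_eq_sub_primitive (haI.mul_continuousOn hGuc)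
      (fun x hx => mul_nonneg (ha_nonneg x) (hG_nonneg _ (hu_range x hx).1)) hu'_eq)
  obtain ⟨x₀, hx₀, hux₀⟩ := hu_max
  have hpoint : ∀ x ∈ Icc σ τ, ρ * r / (τ - σ) * (min (x - σ) (τ - x) * a x * φ x) ≤
      lam * (a x * φ x) * u x - a x * G (u x) * φ x := by
    intro x hx
    have htent := hconc.mul_min_div_le (hu_range σ hσ).1 (hu_range τ hτ).1 hx₀ hr.le hux₀.ge hx
    have hGu : G (u x) ≤ (lam - ρ) * u x := by
      rcases (hu_range x hx).1.eq_or_lt with hu0 | hu0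
      · rw [← hu0, hG0, mul_zero]
      · exact (hG_lt _ hu0 (hu_range x hx).2).le
    have haφ : 0 ≤ a x * φ x := mul_nonneg (ha_nonneg x) (hφ_nonneg x hx)
    calc ρ * r / (τ - σ) * (min (x - σ) (τ - x) * a x * φ x)
        = ρ * (r * min (x - σ) (τ - x) / (τ - σ)) * (a x * φ x) := by ring
      _ ≤ ρ * u x * (a x * φ x) := by gcongr
      _ ≤ (lam * u x - G (u x)) * (a x * φ x) := by gcongr; linarith
      _ = lam * (a x * φ x) * u x - a x * G (u x) * φ x := by ring
  calc ρ * r / (τ - σ) * ∫ x in σ..τ, min (x - σ) (τ - x) * a x * φ x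
      = ∫ x in σ..τ, ρ * r / (τ - σ) * (min (x - σ) (τ - x) * a x * φ x) :=
        (intervalIntegral.integral_const_mul _ _).symm
    _ ≤ ∫ x in σ..τ, (lam * (a x * φ x) * u x - a x * G (u x) * φ x) := by
        refine intervalIntegral.integral_mono_on hle ?_ ?_ hpoint
        · exact (((haI.continuousOn_mul (by fun_prop)).mul_continuousOn hφc)).const_mul _
        · exact (((haI.mul_continuousOn hφc).const_mul lam).mul_continuousOn huc).sub
            ((haI.mul_continuousOn hGuc).mul_continuousOn hφc)
    _ = φ' σ * u σ - φ' τ * u τ := by rw [hgreen, hφσ, hφτ]; ring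
    _ ≤ _ := mul_sub_mul_le_sSup_abs_mul_add isCompact_Icc hφ'_cont hσ hτ
        (hu_range σ hσ).1 (hu_range τ hτ).1

/-- Lower bound for the boundary values of a solution in terms of the
principal eigenfunction: with `φ` a nonnegative Dirichlet eigenfunction of
`φ'' + λ a(x) φ = 0` on `[σ,τ]`, `G(s) < (λ-ρ)s` for `0 < s ≤ r`, and `u : [σ,τ] → [0,r]`
a solution of `u'' + a(x) G(u) = 0` with maximum `r`, one has
`(sup |φ'|)·(u(σ)+u(τ)) ≥ (ρ r/(τ-σ)) ∫_σ^τ min{x-σ, τ-x} a(x) φ(x) dx`. -/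
theorem boundary_lower_bound_via_eigenfunction
    (σ τ : ℝ) (hστ : σ < τ)
    (ρ lam r : ℝ) (hρ : 0 < ρ) (hρlam : ρ < lam) (hr : 0 < r)
    (a : ℝ → ℝ) (ha_int : IntegrableOn a (Set.Icc σ τ)) (ha_nonneg : ∀ x, 0 ≤ a x)
    (φ φ' : ℝ → ℝ)
    (hφ_deriv : ∀ x ∈ Set.Icc σ τ, HasDerivWithinAt φ (φ' x) (Set.Icc σ τ) x)
    (hφ'_cont : ContinuousOn φ' (Set.Icc σ τ))
    (hφ'_eq : ∀ x ∈ Set.Icc σ τ, φ' x = φ' σ - lam * ∫ ξ in σ..x, a ξ * φ ξ)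
    (hφσ : φ σ = 0) (hφτ : φ τ = 0)
    (hφ_nonneg : ∀ x ∈ Set.Icc σ τ, 0 ≤ φ x)
    (G : ℝ → ℝ) (hG_cont : ContinuousOn G (Set.Ici 0))
    (hG_nonneg : ∀ s, 0 ≤ s → 0 ≤ G s) (hG0 : G 0 = 0)
    (hG_lt : ∀ s, 0 < s → s ≤ r → G s < (lam - ρ) * s)
    (u u' : ℝ → ℝ)
    (hu_deriv : ∀ x ∈ Set.Icc σ τ, HasDerivWithinAt u (u' x) (Set.Icc σ τ) x)
    (hu'_cont : ContinuousOn u' (Set.Icc σ τ))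
    (hu_range : ∀ x ∈ Set.Icc σ τ, 0 ≤ u x ∧ u x ≤ r)
    (hu'_eq : ∀ x ∈ Set.Icc σ τ, u' x = u' σ - ∫ ξ in σ..x, a ξ * G (u ξ))
    (hu_max : ∃ x ∈ Set.Icc σ τ, u x = r) :
    ρ * r / (τ - σ) * ∫ x in σ..τ, (min (x - σ) (τ - x)) * a x * φ x ≤
      (sSup ((fun x => |φ' x|) '' Set.Icc σ τ)) * (u σ + u τ) :=
  boundary_lower_bound_via_eigenfunction_general σ τ hστ ρ lam r hρ hr a ha_int ha_nonneg φ φ'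
    hφ_deriv hφ'_cont hφ'_eq hφσ hφτ hφ_nonneg G hG_cont hG_nonneg hG0 hG_lt u u' hu_deriv hu'_cont
    hu_range hu'_eq hu_max
end

section
/- Let w : [0,L] → ℝ be Lebesgue integrable and let u : [0,L] → ℝ be of class C¹ with u'(x) = u'(0) − ∫₀ˣ w(ξ) dξ for all x ∈ [0,L]. Assume that w(ξ) = 0 for a.e. ξ ∈ [0,L] with u(ξ) ≤ 0, and that u satisfies the Sturm–Liouville boundary conditions αu(0) − βu'(0) = 0 and γu(L) + δu'(L) = 0. Then u(x) ≥ 0 for every x ∈ [0,L]. -/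
open Set MeasureTheory Topology

set_option maxHeartbeats 1000000 in
/-- Maximum principle: if `u` is `C¹` on `[0,L]` with
`u'(x) = u'(0) - ∫_0^x w`, where `w` is integrable and vanishes a.e. where `u ≤ 0`,
and `u` satisfies the Sturm–Liouville boundary conditions, then `u ≥ 0` on `[0,L]`. -/
theorem maximum_principle_sturm_liouville
    (L : ℝ) (hL : 0 < L)
    (α β γ δ : ℝ) (hα : 0 ≤ α) (hβ : 0 ≤ β) (hγ : 0 ≤ γ) (hδ : 0 ≤ δ)
    (hC : 0 < γ * β + α * γ + α * δ)
    (w : ℝ → ℝ) (hw_int : IntegrableOn w (Set.Icc 0 L))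
    (u u' : ℝ → ℝ)
    (hu_deriv : ∀ x ∈ Set.Icc 0 L, HasDerivWithinAt u (u' x) (Set.Icc 0 L) x)
    (hu'_cont : ContinuousOn u' (Set.Icc 0 L))
    (hu'_eq : ∀ x ∈ Set.Icc 0 L, u' x = u' 0 - ∫ ξ in (0:ℝ)..x, w ξ)
    (hw_zero : ∀ᵐ ξ ∂(volume.restrict (Set.Icc (0:ℝ) L)), u ξ ≤ 0 → w ξ = 0)
    (hbc0 : α * u 0 - β * u' 0 = 0)
    (hbcL : γ * u L + δ * u' L = 0) :
    ∀ x ∈ Set.Icc 0 L, 0 ≤ u x := by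
  intro x₀ hx₀mem
  by_contra hneg
  push_neg at hneg
  obtain ⟨hx₀0, hx₀L⟩ := hx₀mem
  have hu_cont : ContinuousOn u (Icc 0 L) := fun z hz => (hu_deriv z hz).continuousWithinAt
  -- u' is constant on subintervals where u ≤ 0
  have hconst : ∀ p q : ℝ, 0 ≤ p → p ≤ q → q ≤ L → (∀ z ∈ Icc p q, u z ≤ 0) → u' q = u' p := by
    intro p q hp hpq hqL hle
    have hpmem : p ∈ Icc 0 L := ⟨hp, hpq.trans hqL⟩
    have hqmem : q ∈ Icc 0 L := ⟨hp.trans hpq, hqL⟩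
    have hsub : Ioc p q ⊆ Icc 0 L := (Ioc_subset_Icc_self).trans (Icc_subset_Icc hp hqL)
    have hae : ∀ᵐ ξ ∂(volume.restrict (Ioc p q)), w ξ = 0 := by
      have h1 : ∀ᵐ ξ ∂(volume.restrict (Ioc p q)), u ξ ≤ 0 → w ξ = 0 :=
        ae_restrict_of_ae_restrict_of_subset hsub hw_zero
      have h2 : ∀ᵐ ξ ∂(volume.restrict (Ioc p q)), ξ ∈ Ioc p q :=
        ae_restrict_mem measurableSet_Ioc
      filter_upwards [h1, h2] with ξ h1 h2
      exact h1 (hle ξ (Ioc_subset_Icc_self h2))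
    have hint : ∫ ξ in p..q, w ξ = 0 := by
      rw [intervalIntegral.integral_of_le hpq]
      exact integral_eq_zero_of_ae hae
    have hi1 : IntervalIntegrable w volume 0 p := by
      apply IntegrableOn.intervalIntegrable
      apply hw_int.mono_set
      rw [uIcc_of_le hp]
      exact Icc_subset_Icc le_rfl (hpq.trans hqL)
    have hi2 : IntervalIntegrable w volume p q := by
      apply IntegrableOn.intervalIntegrable
      apply hw_int.mono_set
      rw [uIcc_of_le hpq]
      exact Icc_subset_Icc hp hqL
    have hadd : (∫ ξ in (0:ℝ)..p, w ξ) + ∫ ξ in p..q, w ξ = ∫ ξ in (0:ℝ)..q, w ξ :=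
      intervalIntegral.integral_add_adjacent_intervals hi1 hi2
    rw [hu'_eq p hpmem, hu'_eq q hqmem, ← hadd, hint]
    ring
  -- u is affine on subintervals where u ≤ 0
  have haff : ∀ p q : ℝ, 0 ≤ p → p ≤ q → q ≤ L → (∀ z ∈ Icc p q, u z ≤ 0) →
      ∀ x ∈ Icc p q, u x = u p + u' p * (x - p) := by
    intro p q hp hpq hqL hle x hx
    have hcont : ContinuousOn (fun y => u y - u' p * y) (Icc p q) := by
      apply ContinuousOn.sub
      · exact hu_cont.mono (Icc_subset_Icc hp hqL)
      · exact (continuous_const.mul continuous_id).continuousOn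
    have hderiv : ∀ y ∈ Ico p q, HasDerivWithinAt (fun y => u y - u' p * y) 0 (Ici y) y := by
      intro y hy
      have hymem : y ∈ Icc 0 L := ⟨hp.trans hy.1, hy.2.le.trans hqL⟩
      have hmem : Icc (0:ℝ) L ∈ 𝓝[≥] y :=
        Icc_mem_nhdsGE_of_mem ⟨hymem.1, lt_of_lt_of_le hy.2 hqL⟩
      have hd : HasDerivWithinAt u (u' y) (Ici y) y :=
        (hu_deriv y hymem).mono_of_mem_nhdsWithin hmem
      have hy' : u' y = u' p := hconst p y hp hy.1 hymem.2
        (fun z hz => hle z ⟨hz.1, hz.2.trans hy.2.le⟩)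
      have : HasDerivWithinAt (fun y => u y - u' p * y) (u' y - u' p * 1) (Ici y) y :=
        hd.sub (((hasDerivAt_id y).const_mul (u' p)).hasDerivWithinAt)
      simpa [hy'] using this
    have := constant_of_has_deriv_right_zero hcont hderiv x hx
    linarith [this]
  -- left endpoint
  set S : Set ℝ := insert 0 (Icc 0 x₀ ∩ u ⁻¹' {0}) with hSdef
  have hS0 : (0:ℝ) ∈ S := mem_insert 0 _
  have hSne : S.Nonempty := ⟨0, hS0⟩
  have hSbdd : BddAbove S := by
    refine ⟨x₀, fun z hz => ?_⟩
    rcases hz with hz | hz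
    · simpa [hz] using hx₀0
    · exact hz.1.2
  have hScl : IsClosed S := by
    rw [hSdef, insert_eq]
    exact isClosed_singleton.union
      ((hu_cont.mono (Icc_subset_Icc le_rfl hx₀L)).preimage_isClosed_of_isClosed
        isClosed_Icc isClosed_singleton)
  set a := sSup S with hadef
  have haS : a ∈ S := hScl.csSup_mem hSne hSbdd
  have ha0 : 0 ≤ a := le_csSup hSbdd hS0
  have hax₀ : a ≤ x₀ := csSup_le hSne (fun z hz => by
    rcases hz with hz | hz
    · simpa [hz] using hx₀0
    · exact hz.1.2)
  have hkeyL : ∀ z, a < z → z ≤ x₀ → u z < 0 := by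
    intro z haz hzx₀
    have hzS : z ∉ S := fun h => absurd (le_csSup hSbdd h) (not_le.mpr haz)
    have hzne : u z ≠ 0 := by
      intro h
      exact hzS (mem_insert_iff.mpr (Or.inr ⟨⟨ha0.trans haz.le, hzx₀⟩, h⟩))
    rcases lt_or_gt_of_ne hzne with h | h
    · exact h
    · exfalso
      have hcont : ContinuousOn u (Icc z x₀) :=
        hu_cont.mono (Icc_subset_Icc (ha0.trans haz.le) hx₀L)
      have : (0:ℝ) ∈ Icc (u x₀) (u z) := ⟨hneg.le, h.le⟩
      obtain ⟨y, hy, huy⟩ := intermediate_value_Icc' hzx₀ hcont this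
      have : y ∈ S := mem_insert_iff.mpr (Or.inr ⟨⟨ha0.trans (haz.le.trans hy.1), hy.2⟩, huy⟩)
      exact absurd (le_csSup hSbdd this) (not_le.mpr (lt_of_lt_of_le haz hy.1))
  have hua : u a ≤ 0 := by
    by_contra h
    push_neg at h
    have hax : a < x₀ := lt_of_le_of_ne hax₀ (fun he => by rw [he] at h; linarith)
    have hcont : ContinuousOn u (Icc a x₀) := hu_cont.mono (Icc_subset_Icc ha0 hx₀L)
    have : (0:ℝ) ∈ Icc (u x₀) (u a) := ⟨hneg.le, h.le⟩
    obtain ⟨y, hy, huy⟩ := intermediate_value_Icc' hax.le hcont this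
    have hyS : y ∈ S := mem_insert_iff.mpr (Or.inr ⟨⟨ha0.trans hy.1, hy.2⟩, huy⟩)
    have : y = a := le_antisymm (le_csSup hSbdd hyS) hy.1
    rw [this] at huy
    linarith
  have haOr : a = 0 ∨ u a = 0 := by
    rcases haS with h | h
    · exact Or.inl h
    · exact Or.inr h.2
  have huleL : ∀ z ∈ Icc a x₀, u z ≤ 0 := by
    intro z hz
    rcases eq_or_lt_of_le hz.1 with h | h
    · rw [← h]; exact hua
    · exact (hkeyL z h hz.2).le
  -- right endpoint
  set T : Set ℝ := insert L (Icc x₀ L ∩ u ⁻¹' {0}) with hTdef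
  have hT0 : L ∈ T := mem_insert L _
  have hTne : T.Nonempty := ⟨L, hT0⟩
  have hTbdd : BddBelow T := by
    refine ⟨x₀, fun z hz => ?_⟩
    rcases hz with hz | hz
    · simpa [hz] using hx₀L
    · exact hz.1.1
  have hTcl : IsClosed T := by
    rw [hTdef, insert_eq]
    exact isClosed_singleton.union
      ((hu_cont.mono (Icc_subset_Icc hx₀0 le_rfl)).preimage_isClosed_of_isClosed
        isClosed_Icc isClosed_singleton)
  set b := sInf T with hbdef
  have hbT : b ∈ T := hTcl.csInf_mem hTne hTbdd
  have hbL : b ≤ L := csInf_le hTbdd hT0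
  have hx₀b : x₀ ≤ b := le_csInf hTne (fun z hz => by
    rcases hz with hz | hz
    · simpa [hz] using hx₀L
    · exact hz.1.1)
  have hkeyR : ∀ z, x₀ ≤ z → z < b → u z < 0 := by
    intro z hx₀z hzb
    have hzT : z ∉ T := fun h => absurd (csInf_le hTbdd h) (not_le.mpr hzb)
    have hzne : u z ≠ 0 := by
      intro h
      exact hzT (mem_insert_iff.mpr (Or.inr ⟨⟨hx₀z, hzb.le.trans hbL⟩, h⟩))
    rcases lt_or_gt_of_ne hzne with h | h
    · exact h
    · exfalso
      have hcont : ContinuousOn u (Icc x₀ z) :=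
        hu_cont.mono (Icc_subset_Icc hx₀0 (hzb.le.trans hbL))
      have : (0:ℝ) ∈ Icc (u x₀) (u z) := ⟨hneg.le, h.le⟩
      obtain ⟨y, hy, huy⟩ := intermediate_value_Icc hx₀z hcont this
      have : y ∈ T := mem_insert_iff.mpr (Or.inr ⟨⟨hy.1, (hy.2.trans hzb.le).trans hbL⟩, huy⟩)
      exact absurd (csInf_le hTbdd this) (not_le.mpr (lt_of_le_of_lt hy.2 hzb))
  have hub : u b ≤ 0 := by
    by_contra h
    push_neg at h
    have hxb : x₀ < b := lt_of_le_of_ne hx₀b (fun he => by rw [← he] at h; linarith)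
    have hcont : ContinuousOn u (Icc x₀ b) := hu_cont.mono (Icc_subset_Icc hx₀0 hbL)
    have : (0:ℝ) ∈ Icc (u x₀) (u b) := ⟨hneg.le, h.le⟩
    obtain ⟨y, hy, huy⟩ := intermediate_value_Icc hxb.le hcont this
    have hyT : y ∈ T := mem_insert_iff.mpr (Or.inr ⟨⟨hy.1, hy.2.trans hbL⟩, huy⟩)
    have : b = y := le_antisymm (csInf_le hTbdd hyT) hy.2
    rw [← this] at huy
    linarith
  have hbOr : b = L ∨ u b = 0 := by
    rcases hbT with h | h
    · exact Or.inl h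
    · exact Or.inr h.2
  have huleR : ∀ z ∈ Icc x₀ b, u z ≤ 0 := by
    intro z hz
    rcases eq_or_lt_of_le hz.2 with h | h
    · rw [h]; exact hub
    · exact (hkeyR z hz.1 h).le
  -- combine
  have hab : a ≤ b := hax₀.trans hx₀b
  have hule : ∀ z ∈ Icc a b, u z ≤ 0 := by
    intro z hz
    rcases le_total z x₀ with h | h
    · exact huleL z ⟨hz.1, h⟩
    · exact huleR z ⟨h, hz.2⟩
  set c := u' a with hcdef
  have hbLe : b ≤ L := hbL
  have haffab : ∀ x ∈ Icc a b, u x = u a + c * (x - a) :=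
    haff a b ha0 hab hbLe hule
  have hux₀ : u x₀ = u a + c * (x₀ - a) := haffab x₀ ⟨hax₀, hx₀b⟩
  have hubeq : u b = u a + c * (b - a) := haffab b ⟨hab, le_rfl⟩
  have hu'b : u' b = c := hconst a b ha0 hab hbLe hule
  clear hSdef hTdef haS hbT hS0 hT0 hSne hTne hSbdd hTbdd hScl hTcl
  clear hkeyL hkeyR huleL huleR hule haffab haff hconst hadef hbdef
  clear_value a b c
  clear S T
  -- case analysis
  rcases eq_or_ne (u a) 0 with hua0 | huan
  · rcases eq_or_ne (u b) 0 with hub0 | hubn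
    · -- u a = 0 and u b = 0 : u affine with zero endpoints, contradiction
      have hax : a < x₀ := lt_of_le_of_ne hax₀ (fun h => by rw [h] at hua0; linarith)
      have hc0 : c = 0 := by
        rw [hua0, hub0] at hubeq
        rcases mul_eq_zero.mp (by linarith : c * (b - a) = 0) with h | h
        · exact h
        · exfalso; have : a < b := lt_of_lt_of_le hax hx₀b; linarith
      rw [hua0, hc0] at hux₀
      simp at hux₀
      linarith
    · -- u a = 0, u b ≠ 0 : b = L, u L < 0, slope negative
      have hbL' : b = L := by
        rcases hbOr with h | h
        · exact h
        · exact absurd h hubn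
      have huLneg : u L < 0 := by
        rw [← hbL']
        exact lt_of_le_of_ne hub hubn
      have haltb : a < b := by
        rcases eq_or_lt_of_le hab with h | h
        · exfalso; rw [h] at hua0; exact hubn hua0
        · exact h
      have hcneg : c < 0 := by
        rw [hua0] at hubeq
        have hubneg : u b < 0 := lt_of_le_of_ne hub hubn
        nlinarith
      have hu'L : u' L = c := by rw [← hbL']; exact hu'b
      rw [hu'L] at hbcL
      have h1 : γ * u L ≤ 0 := by nlinarith
      have h2 : δ * c ≤ 0 := by nlinarith
      have h1' : γ * u L = 0 := by linarith
      have h2' : δ * c = 0 := by linarith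
      have hγ0 : γ = 0 := by
        rcases mul_eq_zero.mp h1' with h | h
        · exact h
        · exfalso; linarith
      have hδ0 : δ = 0 := by
        rcases mul_eq_zero.mp h2' with h | h
        · exact h
        · exfalso; linarith
      rw [hγ0, hδ0] at hC
      nlinarith
  · -- u a ≠ 0 : a = 0 and u 0 < 0
    have ha0' : a = 0 := by
      rcases haOr with h | h
      · exact h
      · exact absurd h huan
    have hu0neg : u 0 < 0 := by
      have h := lt_of_le_of_ne hua huan
      rwa [ha0'] at h
    have hc0' : u' 0 = c := by rw [hcdef, ha0']
    rw [hc0'] at hbc0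
    have hbc0' : α * u 0 = β * c := by linarith
    have hua' : u a = u 0 := by rw [ha0']
    rcases eq_or_ne (u b) 0 with hub0 | hubn
    · -- u b = 0 : slope positive, α = β = 0
      have hbpos : 0 < b := by
        rcases eq_or_lt_of_le (ha0.trans hab) with h | h
        · exfalso
          have hab' : u a = u b := by rw [ha0', ← h]
          exact huan (hab'.trans hub0)
        · exact h
      have hcpos : 0 < c := by
        rw [hub0, hua', ha0'] at hubeq
        nlinarith
      have h1 : α * u 0 ≤ 0 := by nlinarith
      have h2 : β * c ≥ 0 := by nlinarith
      have h1' : α * u 0 = 0 := by linarith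
      have h2' : β * c = 0 := by linarith
      have hα0 : α = 0 := by
        rcases mul_eq_zero.mp h1' with h | h
        · exact h
        · exfalso; linarith
      have hβ0 : β = 0 := by
        rcases mul_eq_zero.mp h2' with h | h
        · exact h
        · exfalso; linarith
      rw [hα0, hβ0] at hC
      nlinarith
    · -- u b ≠ 0 : b = L, analyze sign of c
      have hbL' : b = L := by
        rcases hbOr with h | h
        · exact h
        · exact absurd h hubn
      have huLneg : u L < 0 := by
        rw [← hbL']
        exact lt_of_le_of_ne hub hubn
      have hu'L : u' L = c := by rw [← hbL']; exact hu'b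
      rw [hu'L] at hbcL
      rcases lt_trichotomy c 0 with hc | hc | hc
      · -- c < 0 : γ = δ = 0
        have h1 : γ * u L ≤ 0 := by nlinarith
        have h2 : δ * c ≤ 0 := by nlinarith
        have h1' : γ * u L = 0 := by linarith
        have h2' : δ * c = 0 := by linarith
        have hγ0 : γ = 0 := by
          rcases mul_eq_zero.mp h1' with h | h
          · exact h
          · exfalso; linarith
        have hδ0 : δ = 0 := by
          rcases mul_eq_zero.mp h2' with h | h
          · exact h
          · exfalso; linarith
        rw [hγ0, hδ0] at hC
        nlinarith
      · -- c = 0 : α = γ = 0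
        rw [hc] at hbc0' hbcL
        simp at hbc0' hbcL
        have hα0 : α = 0 := by
          rcases hbc0' with h | h
          · exact h
          · exfalso; linarith
        have hγ0 : γ = 0 := by
          rcases hbcL with h | h
          · exact h
          · exfalso; linarith
        rw [hα0, hγ0] at hC
        nlinarith
      · -- c > 0 : α = β = 0
        have h1 : α * u 0 ≤ 0 := by nlinarith
        have h2 : β * c ≥ 0 := by nlinarith
        have h1' : α * u 0 = 0 := by linarith
        have h2' : β * c = 0 := by linarith
        have hα0 : α = 0 := by
          rcases mul_eq_zero.mp h1' with h | h
          · exact h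
          · exfalso; linarith
        have hβ0 : β = 0 := by
          rcases mul_eq_zero.mp h2' with h | h
          · exact h
          · exfalso; linarith
        rw [hα0, hβ0] at hC
        nlinarith
end
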